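/- arXiv:2109.01260 — 2 statements merged into one kernel-verified Lean document; each statement's English description precedes it below -/
import Mathlib

section
/- Let A ⊂ X be bounded and metric doubling with constant M, and let F be a collection of balls {B(x, r_x)}_{x∈A}, one centered at each point of A, with radii at most R for some R > 0. Then there exist finite or countable subcollections G₁, …, G_N of F, with N = M⁴ and G_j = {B_{j,l} = B(x_{j,l}, r_{j,l})}_l, such that: (1) A ⊂ ∪_{j=1}^N ∪_l B_{j,l}; (2) if j ∈ {1,…,N} and l ≠ m, then x_{j,l} ∈ X ∖ B_{j,m} and x_{j,m} ∈ X ∖ B_{j,l}; (3) if j ∈ {1,…,N} and l ≠ m, then (1/2)B_{j,l} ∩ (1/2)B_{j,m} = ∅. -/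
open Set Metric MeasureTheory Filter ENNReal NNReal TopologicalSpace

noncomputable section

/-- A rectifiable curve parametrized by arc length: a `1`-Lipschitz map
`γ : [0, len] → X` such that the length (variation) of `γ` on `[0, t]` equals `t`. -/
structure Curve (X : Type*) [MetricSpace X] where
  len : ℝ
  len_nonneg : 0 ≤ len
  toFun : ℝ → X
  lipschitz : LipschitzOnWith 1 toFun (Set.Icc 0 len)
  arclength : ∀ t ∈ Set.Icc (0 : ℝ) len,
    eVariationOn toFun (Set.Icc 0 t) = ENNReal.ofReal t

/-- The curve `γ` lies in the set `A`. -/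
def Curve.In {X : Type*} [MetricSpace X] (γ : Curve X) (A : Set X) : Prop :=
  ∀ t ∈ Set.Icc (0 : ℝ) γ.len, γ.toFun t ∈ A

/-- The image of a curve. -/
def Curve.image {X : Type*} [MetricSpace X] (γ : Curve X) : Set X :=
  γ.toFun '' Set.Icc (0 : ℝ) γ.len

/-- The curve integral `∫_γ ρ ds := ∫_0^{ℓ_γ} ρ(γ(s)) ds`. -/
def curveIntegralENNReal {X : Type*} [MetricSpace X] (ρ : X → ℝ≥0∞) (γ : Curve X) : ℝ≥0∞ :=
  ∫⁻ s in Set.Icc (0 : ℝ) γ.len, ρ (γ.toFun s)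

/-- The `p`-modulus of a family of curves. -/
def pModulus {X : Type*} [MetricSpace X] [MeasurableSpace X] (p : ℝ) (μ : Measure X)
    (Γ : Set (Curve X)) : ℝ≥0∞ :=
  ⨅ (ρ : X → ℝ≥0∞) (_ : Measurable ρ) (_ : ∀ γ ∈ Γ, 1 ≤ curveIntegralENNReal ρ γ),
    ∫⁻ x, ρ x ^ p ∂μ

/-- `g` is an upper gradient of `f` in `Ω`. -/
def IsUpperGradientOn {X Y : Type*} [MetricSpace X] [MetricSpace Y]
    (f : X → Y) (g : X → ℝ≥0∞) (Ω : Set X) : Prop :=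
  ∀ γ : Curve X, γ.In Ω →
    edist (f (γ.toFun 0)) (f (γ.toFun γ.len)) ≤ curveIntegralENNReal g γ

/-- `g` is a `p`-weak upper gradient of `f` in `Ω`: the upper gradient inequality
holds for `p`-a.e. curve in `Ω`. -/
def IsWeakUpperGradientOn {X Y : Type*} [MetricSpace X] [MeasurableSpace X] [MetricSpace Y]
    (p : ℝ) (μ : Measure X) (f : X → Y) (g : X → ℝ≥0∞) (Ω : Set X) : Prop :=
  pModulus p μ {γ : Curve X | γ.In Ω ∧
    ¬ edist (f (γ.toFun 0)) (f (γ.toFun γ.len)) ≤ curveIntegralENNReal g γ} = 0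

/-- `f` belongs to the Dirichlet class `D^p(Ω; Y)`: it has an upper gradient in `L^p(Ω, μ)`. -/
def MemDirichlet {X Y : Type*} [MetricSpace X] [MeasurableSpace X] [MetricSpace Y]
    (p : ℝ) (μ : Measure X) (f : X → Y) (Ω : Set X) : Prop :=
  ∃ g : X → ℝ≥0∞, Measurable g ∧ IsUpperGradientOn f g Ω ∧
    ∫⁻ x in Ω, g x ^ p ∂μ < ⊤

/-- `μt` is doubling with constant `Cd` within the open set `W`. -/
def DoublingWithinC {X : Type*} [MetricSpace X] [MeasurableSpace X]
    (μt : Measure X) (Cd : ℝ≥0) (W : Set X) : Prop :=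
  ∀ (x : X) (r : ℝ), 0 < r → Metric.ball x r ⊆ W →
    0 < μt (Metric.ball x (2 * r)) ∧
      μt (Metric.ball x (2 * r)) ≤ Cd * μt (Metric.ball x r) ∧
      μt (Metric.ball x (2 * r)) < ⊤

/-- `μt` is doubling (with some constant) within the open set `W`. -/
def DoublingWithin {X : Type*} [MetricSpace X] [MeasurableSpace X]
    (μt : Measure X) (W : Set X) : Prop :=
  ∃ Cd : ℝ≥0, DoublingWithinC μt Cd W

/-- `L_f(x,r) = sup { d_Y(f(y), f(x)) : y ∈ Ω, d(y,x) ≤ r }`. -/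
def eL {X Y : Type*} [MetricSpace X] [MetricSpace Y]
    (f : X → Y) (Ω : Set X) (x : X) (r : ℝ) : ℝ≥0∞ :=
  ⨆ (y : X) (_ : y ∈ Ω) (_ : dist y x ≤ r), edist (f y) (f x)

/-- `l_f(x,r) = inf { d_Y(f(y), f(x)) : y ∈ Ω, d(y,x) ≥ r }`. -/
def el {X Y : Type*} [MetricSpace X] [MetricSpace Y]
    (f : X → Y) (Ω : Set X) (x : X) (r : ℝ) : ℝ≥0∞ :=
  ⨅ (y : X) (_ : y ∈ Ω) (_ : r ≤ dist y x), edist (f y) (f x)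

/-- `H_f(x,r) = L_f(x,r)/l_f(x,r)`, interpreted as `∞` when the denominator is zero. -/
def eH {X Y : Type*} [MetricSpace X] [MetricSpace Y]
    (f : X → Y) (Ω : Set X) (x : X) (r : ℝ) : ℝ≥0∞ :=
  if el f Ω x r = 0 then ⊤ else eL f Ω x r / el f Ω x r

/-- `h_f(x) = liminf_{r → 0} H_f(x,r)`. -/
def hDil {X Y : Type*} [MetricSpace X] [MetricSpace Y]
    (f : X → Y) (Ω : Set X) (x : X) : ℝ≥0∞ :=
  Filter.liminf (fun r : ℝ => eH f Ω x r) (nhdsWithin 0 (Set.Ioi 0))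

/-- `lip_f(x) = liminf_{r → 0} sup_{y ∈ B(x,r)} d_Y(f(y), f(x)) / r` (within `Ω`). -/
def elip {X Y : Type*} [MetricSpace X] [MetricSpace Y]
    (f : X → Y) (Ω : Set X) (x : X) : ℝ≥0∞ :=
  Filter.liminf
    (fun r : ℝ =>
      (⨆ (y : X) (_ : y ∈ Ω ∩ Metric.ball x r), edist (f y) (f x)) / ENNReal.ofReal r)
    (nhdsWithin 0 (Set.Ioi 0))

/-- `f` is a homeomorphism from `Ω` onto `f(Ω)`. -/
def IsHomeoOn {X Y : Type*} [TopologicalSpace X] [TopologicalSpace Y]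
    (f : X → Y) (Ω : Set X) : Prop :=
  ContinuousOn f Ω ∧ ∃ g : Y → X, ContinuousOn g (f '' Ω) ∧ ∀ x ∈ Ω, g (f x) = x

/-- The restricted codimension-`p` Hausdorff content with respect to `μt`. -/
def codimHContent {X : Type*} [MetricSpace X] [MeasurableSpace X]
    (μt : Measure X) (p R : ℝ) (A : Set X) : ℝ≥0∞ :=
  ⨅ (I : Set (X × ℝ)) (_ : I.Countable) (_ : ∀ b ∈ I, 0 < b.2 ∧ b.2 ≤ R)
    (_ : A ⊆ ⋃ b ∈ I, Metric.ball b.1 b.2),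
    ∑' b : I, μt (Metric.ball b.1.1 b.1.2) / ENNReal.ofReal (b.1.2 ^ p)

/-- The codimension-`p` Hausdorff measure with respect to `μt`. -/
def codimH {X : Type*} [MetricSpace X] [MeasurableSpace X]
    (μt : Measure X) (p : ℝ) (A : Set X) : ℝ≥0∞ :=
  ⨆ (R : ℝ) (_ : 0 < R), codimHContent μt p R A

/-- `E` has σ-finite codimension-`p` Hausdorff measure with respect to `μt`. -/
def SigmaFiniteCodimH {X : Type*} [MetricSpace X] [MeasurableSpace X]
    (μt : Measure X) (p : ℝ) (E : Set X) : Prop :=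
  ∃ Ek : ℕ → Set X, E ⊆ ⋃ k, Ek k ∧ ∀ k, codimH μt p (Ek k) < ⊤

/-- `μ₀` is a Vitali measure: every fine covering (by closed balls, recorded as
center–radius pairs of positive radius) of any set `A` admits a pairwise disjoint
subcollection covering `μ₀`-almost all of `A`. -/
def IsVitaliMeasure {Z : Type*} [MetricSpace Z] [MeasurableSpace Z] (μ₀ : Measure Z) : Prop :=
  ∀ (A : Set Z) (F : Set (Z × ℝ)), (∀ b ∈ F, 0 < b.2) →
    (∀ x ∈ A, ∀ ε : ℝ, 0 < ε → ∃ r : ℝ, 0 < r ∧ r < ε ∧ (x, r) ∈ F) →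
    ∃ G ⊆ F, (G.PairwiseDisjoint fun b => Metric.closedBall b.1 b.2) ∧
      μ₀ (A \ ⋃ b ∈ G, Metric.closedBall b.1 b.2) = 0

/-- Ahlfors `Q`-regularity. -/
def AhlforsRegular {Z : Type*} [MetricSpace Z] [MeasurableSpace Z]
    (μ : Measure Z) (Q : ℝ) : Prop :=
  ∃ C : ℝ≥0, 1 ≤ C ∧ ∀ (x : Z) (r : ℝ), 0 < r →
    ENNReal.ofReal r < EMetric.diam (Set.univ : Set Z) →
    ENNReal.ofReal (r ^ Q) / C ≤ μ (Metric.ball x r) ∧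
      μ (Metric.ball x r) ≤ C * ENNReal.ofReal (r ^ Q)

/-- The set `A` is metric doubling with constant `M`: each ball in `A` of radius `r`
can be covered by `M` balls in `A` of radius `r/2`. -/
def MetricDoublingWith {X : Type*} [MetricSpace X] (A : Set X) (M : ℕ) : Prop :=
  ∀ x ∈ A, ∀ r : ℝ, 0 < r → ∃ T : Finset X, ↑T ⊆ A ∧ T.card ≤ M ∧
    A ∩ Metric.ball x r ⊆ ⋃ y ∈ T, Metric.ball y (r / 2)

end

noncomputable section CoveringAux

open Metric

variable {X : Type*} [MetricSpace X]

/-- Pairwise `s`-separated set. -/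
def SepSet (s : ℝ) (S : Set X) : Prop :=
  ∀ ⦃x⦄, x ∈ S → ∀ ⦃y⦄, y ∈ S → x ≠ y → s ≤ dist x y

lemma SepSet.mono {s : ℝ} {S T : Set X} (h : SepSet s T) (hST : S ⊆ T) : SepSet s S :=
  fun x hx y hy hxy => h (hST hx) (hST hy) hxy

lemma cover_iter {A : Set X} {M : ℕ} (hM : MetricDoublingWith A M) (k : ℕ) :
    ∀ x ∈ A, ∀ ρ : ℝ, 0 < ρ → ∃ T : Finset X, ↑T ⊆ A ∧ T.card ≤ M ^ k ∧
      A ∩ Metric.ball x ρ ⊆ ⋃ y ∈ T, Metric.ball y (ρ / 2 ^ k) := by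
  classical
  induction k with
  | zero =>
    intro x hx ρ hρ
    refine ⟨{x}, by simpa using hx, by simp, ?_⟩
    intro z hz
    simp only [Finset.mem_singleton, Set.mem_iUnion]
    exact ⟨x, rfl, by simpa using hz.2⟩
  | succ k ih =>
    intro x hx ρ hρ
    obtain ⟨T, hTA, hTcard, hTcov⟩ := ih x hx ρ hρ
    have hstep : ∀ y : X, y ∈ A → ∃ T2 : Finset X, ↑T2 ⊆ A ∧ T2.card ≤ M ∧
        A ∩ Metric.ball y (ρ / 2 ^ k) ⊆ ⋃ w ∈ T2, Metric.ball w (ρ / 2 ^ k / 2) :=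
      fun y hy => hM y hy (ρ / 2 ^ k) (by positivity)
    choose! T2 hT2A hT2card hT2cov using hstep
    refine ⟨T.biUnion T2, ?_, ?_, ?_⟩
    · intro z hz
      simp only [Finset.coe_biUnion, Set.mem_iUnion, Finset.mem_coe] at hz
      obtain ⟨y, hy, hz⟩ := hz
      exact hT2A y (hTA hy) hz
    · calc (T.biUnion T2).card ≤ ∑ y ∈ T, (T2 y).card := Finset.card_biUnion_le
        _ ≤ ∑ _y ∈ T, M := Finset.sum_le_sum (fun y hy => hT2card y (hTA hy))
        _ = T.card * M := by simp [Finset.sum_const, Nat.smul_one_eq_cast, mul_comm]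
        _ ≤ M ^ k * M := Nat.mul_le_mul_right _ hTcard
        _ = M ^ (k + 1) := (pow_succ M k).symm
    · intro z hz
      have hz2 := hTcov hz
      simp only [Set.mem_iUnion] at hz2
      obtain ⟨y, hy, hzball⟩ := hz2
      have hyA : y ∈ A := hTA hy
      have := hT2cov y hyA ⟨hz.1, hzball⟩
      simp only [Set.mem_iUnion] at this ⊢
      obtain ⟨w, hw, hzw⟩ := this
      refine ⟨w, Finset.mem_biUnion.mpr ⟨y, hy, hw⟩, ?_⟩
      have : ρ / 2 ^ k / 2 = ρ / 2 ^ (k + 1) := by rw [pow_succ]; ring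
      rwa [this] at hzw

lemma sep_card {A : Set X} {M : ℕ} (hM : MetricDoublingWith A M) {x : X} (hx : x ∈ A)
    {ρ s : ℝ} (hρ : 0 < ρ) (k : ℕ) (hk : 2 * (ρ / 2 ^ k) ≤ s)
    (S : Finset X) (hS : (S : Set X) ⊆ A ∩ Metric.ball x ρ) (hsep : SepSet s (S : Set X)) :
    S.card ≤ M ^ k := by
  classical
  obtain ⟨T, hTA, hTcard, hTcov⟩ := cover_iter hM k x hx ρ hρ
  have hmap : ∀ z ∈ S, ∃ y, y ∈ T ∧ z ∈ Metric.ball y (ρ / 2 ^ k) := by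
    intro z hz
    have := hTcov (hS hz)
    simpa only [Set.mem_iUnion, exists_prop] using this
  choose! f hfT hfball using hmap
  have : S.card ≤ T.card := by
    apply Finset.card_le_card_of_injOn f (fun z hz => hfT z hz)
    intro z hz w hw hzw
    by_contra hne
    have h1 := hfball z hz
    have h2 := hfball w hw
    rw [hzw] at h1
    have hd : dist z w < 2 * (ρ / 2 ^ k) := by
      have := dist_triangle z (f w) w
      rw [Metric.mem_ball] at h1 h2
      have h2' : dist (f w) w < ρ / 2 ^ k := by rw [dist_comm]; exact h2
      linarith
    exact absurd (hsep hz hw hne) (by linarith)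
  exact this.trans hTcard

lemma exists_maxsep {A : Set X} {M : ℕ} (hM : MetricDoublingWith A M) {x0 : X} (hx0 : x0 ∈ A)
    {ρ0 : ℝ} (hρ0 : 0 < ρ0) (hA0 : A ⊆ Metric.ball x0 ρ0) {U : Set X} (hU : U ⊆ A)
    {s : ℝ} (hs : 0 < s) :
    ∃ S : Finset X, (S : Set X) ⊆ U ∧ SepSet s (S : Set X) ∧ ∀ x ∈ U, ∃ c ∈ S, dist x c < s := by
  classical
  obtain ⟨k, hk⟩ : ∃ k : ℕ, 2 * (ρ0 / 2 ^ k) ≤ s := by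
    obtain ⟨k, hk⟩ := exists_pow_lt_of_lt_one
      (show (0:ℝ) < s / (2 * ρ0) by positivity) (by norm_num : (1:ℝ)/2 < 1)
    refine ⟨k, ?_⟩
    have h2 : ((1:ℝ)/2) ^ k = 1 / 2 ^ k := by rw [div_pow, one_pow]
    rw [h2] at hk
    have h2k : (0:ℝ) < 2 ^ k := by positivity
    rw [div_lt_div_iff₀ h2k (by positivity)] at hk
    rw [show 2 * (ρ0 / 2 ^ k) = 2 * ρ0 / 2 ^ k by ring, div_le_iff₀ h2k]
    nlinarith
  have hbdd : ∀ n ∈ {n : ℕ | ∃ S : Finset X, (S : Set X) ⊆ U ∧ SepSet s (S : Set X) ∧ S.card = n}, n ≤ M ^ k := by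
    rintro n ⟨S, hSU, hSsep, rfl⟩
    exact sep_card hM hx0 hρ0 k hk S
      (fun z hz => ⟨hU (hSU hz), hA0 (hU (hSU hz))⟩) hSsep
  have h0 : (0:ℕ) ∈ {n : ℕ | ∃ S : Finset X, (S : Set X) ⊆ U ∧ SepSet s (S : Set X) ∧ S.card = n} :=
    ⟨∅, by simp, by intro x hx; simp at hx, rfl⟩
  have hmem := Nat.sSup_mem ⟨0, h0⟩ ⟨M ^ k, fun n hn => hbdd n hn⟩
  obtain ⟨S, hSU, hSsep, hScard⟩ := hmem
  refine ⟨S, hSU, hSsep, ?_⟩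
  intro x hx
  by_contra hcon
  push_neg at hcon
  have hxS : x ∉ S := by
    intro hxS
    exact absurd (hcon x hxS) (by simp [hs.le]; exact hs)
  have hins : ((insert x S : Finset X) : Set X) ⊆ U := by
    intro z hz
    simp only [Finset.coe_insert, Set.mem_insert_iff] at hz
    rcases hz with rfl | hz
    · exact hx
    · exact hSU hz
  have hinssep : SepSet s ((insert x S : Finset X) : Set X) := by
    intro a ha b hb hab
    simp only [Finset.coe_insert, Set.mem_insert_iff, Finset.mem_coe] at ha hb
    rcases ha with rfl | ha <;> rcases hb with rfl | hb
    · exact absurd rfl hab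
    · exact hcon b hb
    · rw [dist_comm]; exact hcon a ha
    · exact hSsep ha hb hab
  have hcard : (insert x S).card = S.card + 1 := Finset.card_insert_of_notMem hxS
  have : S.card + 1 ∈ {n : ℕ | ∃ S : Finset X, (S : Set X) ⊆ U ∧ SepSet s (S : Set X) ∧ S.card = n} :=
    ⟨insert x S, hins, hinssep, hcard⟩
  have := le_csSup ⟨M ^ k, fun n hn => hbdd n hn⟩ this
  omega

variable (A : Set X) (R : ℝ) (r : X → ℝ)

def scaleSet (n : ℕ) : Set X := {x | x ∈ A ∧ R / 2 ^ (n + 1) < r x ∧ r x ≤ R / 2 ^ n}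

open Classical in
def maxsepF (U : Set X) (s : ℝ) : Finset X :=
  if h : ∃ S : Finset X, (S : Set X) ⊆ U ∧ SepSet s (S : Set X) ∧ ∀ x ∈ U, ∃ c ∈ S, dist x c < s
  then h.choose else ∅

lemma maxsepF_spec {U : Set X} {s : ℝ}
    (h : ∃ S : Finset X, (S : Set X) ⊆ U ∧ SepSet s (S : Set X) ∧ ∀ x ∈ U, ∃ c ∈ S, dist x c < s) :
    (maxsepF U s : Set X) ⊆ U ∧ SepSet s (maxsepF U s : Set X) ∧
      ∀ x ∈ U, ∃ c ∈ maxsepF U s, dist x c < s := by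
  classical
  rw [maxsepF, dif_pos h]
  exact h.choose_spec

def usetF (prev : ℕ → Finset X) (n : ℕ) : Set X :=
  scaleSet A R r n \ ⋃ m < n, ⋃ c ∈ prev m, Metric.ball c (r c)

def gFun : ℕ → ℕ → Finset X
  | 0 => fun _ => ∅
  | (n + 1) => fun m =>
      if m = n then maxsepF (usetF A R r (gFun n) n) (R / 2 ^ (n + 1)) else gFun n m

def Tsel (n : ℕ) : Finset X := maxsepF (usetF A R r (gFun A R r n) n) (R / 2 ^ (n + 1))

lemma gFun_lt : ∀ n m, m < n → gFun A R r n m = Tsel A R r m := by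
  intro n
  induction n with
  | zero => intro m hm; omega
  | succ n ih =>
    intro m hm
    rcases Nat.lt_succ_iff_lt_or_eq.mp hm with hm' | rfl
    · have : m ≠ n := hm'.ne
      simp only [gFun, this, if_false]
      exact ih m hm'
    · simp [gFun, Tsel]

lemma usetF_congr {p q : ℕ → Finset X} (n : ℕ) (h : ∀ m, m < n → p m = q m) :
    usetF A R r p n = usetF A R r q n := by
  unfold usetF
  congr 1
  exact Set.iUnion_congr fun m => Set.iUnion_congr fun hm => by rw [h m hm]

lemma Tsel_eq (n : ℕ) :
    Tsel A R r n = maxsepF (usetF A R r (Tsel A R r) n) (R / 2 ^ (n + 1)) := by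
  rw [Tsel, usetF_congr A R r n (fun m hm => gFun_lt A R r n m hm)]

lemma finset_coloring {α : Type*} {N : ℕ} (hN : 0 < N) (conf : α → α → Prop)
    (hsymm : ∀ a b, conf a b → conf b a) :
    ∀ S : Finset α,
      (∀ x ∈ S, ∃ D : Finset α, (∀ y ∈ S, y ≠ x → conf x y → y ∈ D) ∧ D.card < N) →
      ∃ c : α → Fin N, ∀ x ∈ S, ∀ y ∈ S, x ≠ y → conf x y → c x ≠ c y := by
  classical
  intro S
  induction S using Finset.induction_on with
  | empty => intro _; exact ⟨fun _ => ⟨0, hN⟩, by simp⟩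
  | @insert a S' haS ih =>
    intro hdeg
    obtain ⟨c, hc⟩ := ih (fun x hx => by
      obtain ⟨D, hD, hDc⟩ := hdeg x (Finset.mem_insert_of_mem hx)
      exact ⟨D, fun y hy => hD y (Finset.mem_insert_of_mem hy), hDc⟩)
    obtain ⟨D, hD, hDcard⟩ := hdeg a (Finset.mem_insert_self a S')
    have hi : ∃ i : Fin N, i ∉ D.image c := by
      by_contra h
      push_neg at h
      have hsub : (Finset.univ : Finset (Fin N)) ⊆ D.image c := fun i _ => h i
      have h1 := Finset.card_le_card hsub
      have h2 := Finset.card_image_le (f := c) (s := D)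
      simp only [Finset.card_univ, Fintype.card_fin] at h1
      omega
    obtain ⟨i, hi⟩ := hi
    refine ⟨Function.update c a i, ?_⟩
    intro x hx y hy hxy hconf
    have hupd : ∀ z ∈ S', Function.update c a i z = c z := by
      intro z hz
      have : z ≠ a := fun h => haS (h ▸ hz)
      simp [Function.update_of_ne this]
    rcases Finset.mem_insert.mp hx with rfl | hx' <;>
      rcases Finset.mem_insert.mp hy with rfl | hy'
    · exact absurd rfl hxy
    · rw [hupd y hy', Function.update_self]
      intro heq
      have hyD : y ∈ D := hD y (Finset.mem_insert_of_mem hy') (fun h => haS (h ▸ hy')) hconf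
      exact hi (heq ▸ Finset.mem_image_of_mem c hyD)
    · rw [hupd x hx', Function.update_self]
      intro heq
      have hxD : x ∈ D := hD x (Finset.mem_insert_of_mem hx')
        (fun h => haS (h ▸ hx')) (hsymm _ _ hconf)
      exact hi (heq ▸ Finset.mem_image_of_mem c hxD)
    · rw [hupd x hx', hupd y hy']
      exact hc x hx' y hy' hxy hconf

lemma exists_scale {R : ℝ} (hR : 0 < R) {t : ℝ} (ht0 : 0 < t) (htR : t ≤ R) :
    ∃ n : ℕ, R / 2 ^ (n + 1) < t ∧ t ≤ R / 2 ^ n := by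
  have hex : ∃ n : ℕ, R / 2 ^ (n + 1) < t := by
    obtain ⟨k, hk⟩ := exists_pow_lt_of_lt_one (div_pos ht0 hR) (by norm_num : (1:ℝ)/2 < 1)
    refine ⟨k, ?_⟩
    have h2 : ((1:ℝ)/2) ^ k = 1 / 2 ^ k := by rw [div_pow, one_pow]
    rw [h2, div_lt_div_iff₀ (by positivity) hR] at hk
    have h2k : (0:ℝ) < 2 ^ k := by positivity
    have h2k1 : (0:ℝ) < 2 ^ (k + 1) := by positivity
    rw [div_lt_iff₀ h2k1]
    rw [pow_succ]
    nlinarith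
  refine ⟨Nat.find hex, Nat.find_spec hex, ?_⟩
  rcases Nat.eq_zero_or_pos (Nat.find hex) with h | h
  · rw [h]; simpa using htR
  · have hmin := Nat.find_min hex (m := Nat.find hex - 1) (by omega)
    push_neg at hmin
    have harg : Nat.find hex - 1 + 1 = Nat.find hex := by omega
    rwa [harg] at hmin

end CoveringAux

/-- Lemma 4.6 (covering lemma): a bounded metric doubling set admits `N = M⁴`
countable subcollections of balls with separation properties covering it. -/
theorem covering_lemma_N_subcollections
    {X : Type*} [MetricSpace X]
    (A : Set X) (hA : Bornology.IsBounded A)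
    (M : ℕ) (hM : MetricDoublingWith A M)
    (R : ℝ) (hR : 0 < R)
    (r : X → ℝ) (hr : ∀ x ∈ A, 0 < r x ∧ r x ≤ R) :
    ∃ G : Fin (M ^ 4) → Set X,
      (∀ j, (G j).Countable ∧ G j ⊆ A) ∧
      (A ⊆ ⋃ j, ⋃ x ∈ G j, Metric.ball x (r x)) ∧
      (∀ j, ∀ x ∈ G j, ∀ y ∈ G j, x ≠ y →
        x ∉ Metric.ball y (r y) ∧ y ∉ Metric.ball x (r x)) ∧
      (∀ j, ∀ x ∈ G j, ∀ y ∈ G j, x ≠ y →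
        Disjoint (Metric.ball x (r x / 2)) (Metric.ball y (r y / 2))) := by
  classical
  rcases Set.eq_empty_or_nonempty A with hAe | ⟨x0, hx0⟩
  · refine ⟨fun _ => ∅, fun j => ⟨Set.countable_empty, Set.empty_subset _⟩, ?_, ?_, ?_⟩
    · rw [hAe]; exact Set.empty_subset _
    · intro j x hx; exact absurd hx (Set.notMem_empty x)
    · intro j x hx; exact absurd hx (Set.notMem_empty x)
  have hM1 : 1 ≤ M := by
    obtain ⟨T0, hT0A, hT0c, hT0cov⟩ := hM x0 hx0 1 one_pos
    have hx0m : x0 ∈ ⋃ y ∈ T0, Metric.ball y (1 / 2) :=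
      hT0cov ⟨hx0, Metric.mem_ball_self one_pos⟩
    simp only [Set.mem_iUnion, exists_prop] at hx0m
    obtain ⟨y, hy, -⟩ := hx0m
    have : 0 < T0.card := Finset.card_pos.mpr ⟨y, hy⟩
    omega
  have hMpos : 0 < M := hM1
  have hN4 : 0 < M ^ 4 := pow_pos hMpos 4
  have hM24 : M ^ 2 ≤ M ^ 4 := Nat.pow_le_pow_right hM1 (by norm_num)
  obtain ⟨ρ0', hA0'⟩ := hA.subset_ball x0
  set ρ0 : ℝ := max ρ0' 1 with hρ0def
  have hρ0 : (0:ℝ) < ρ0 := lt_of_lt_of_le one_pos (le_max_right _ _)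
  have hA0 : A ⊆ Metric.ball x0 ρ0 := hA0'.trans (Metric.ball_subset_ball (le_max_left _ _))
  set T : ℕ → Finset X := Tsel A R r with hTdef
  set U : ℕ → Set X := usetF A R r T with hUdef
  have hUA : ∀ n, U n ⊆ A := fun n x hx => hx.1.1
  have hspos : ∀ n : ℕ, (0:ℝ) < R / 2 ^ (n + 1) := fun n => by positivity
  have hTspec : ∀ n, (T n : Set X) ⊆ U n ∧ SepSet (R / 2 ^ (n + 1)) (T n : Set X) ∧
      ∀ x ∈ U n, ∃ c ∈ T n, dist x c < R / 2 ^ (n + 1) := by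
    intro n
    have hex := exists_maxsep hM hx0 hρ0 hA0 (hUA n) (hspos n)
    have hspec := maxsepF_spec hex
    rwa [← Tsel_eq A R r n] at hspec
  have hTU : ∀ n, (T n : Set X) ⊆ U n := fun n => (hTspec n).1
  have hTsep : ∀ n, SepSet (R / 2 ^ (n + 1)) (T n : Set X) := fun n => (hTspec n).2.1
  have hTmax : ∀ n, ∀ x ∈ U n, ∃ c ∈ T n, dist x c < R / 2 ^ (n + 1) :=
    fun n => (hTspec n).2.2
  have hTscale : ∀ n, (T n : Set X) ⊆ scaleSet A R r n := fun n x hx => (hTU n hx).1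
  have hTA : ∀ n, (T n : Set X) ⊆ A := fun n x hx => (hTscale n hx).1
  -- coloring of each scale
  have hcol : ∀ n, ∃ c : X → Fin (M ^ 4),
      ∀ x ∈ T n, ∀ y ∈ T n, x ≠ y → (dist x y < max (r x) (r y)) → c x ≠ c y := by
    intro n
    apply finset_coloring hN4 (fun x y => dist x y < max (r x) (r y))
      (fun a b hab => by rw [dist_comm b a, max_comm (r b) (r a)]; exact hab)
    intro x hx
    set S2 : Finset X := (T n).filter (fun y => dist y x < R / 2 ^ n) with hS2def
    have hxS2 : x ∈ S2 := Finset.mem_filter.mpr ⟨hx, by rw [dist_self]; positivity⟩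
    have hS2card : S2.card ≤ M ^ 2 := by
      refine sep_card (s := R / 2 ^ (n + 1)) hM (hTA n hx)
        (show (0:ℝ) < R / 2 ^ n by positivity) 2 (le_of_eq ?_) S2 ?_ ?_
      · rw [pow_succ]; field_simp; ring
      · intro z hz
        have hz' := Finset.mem_filter.mp hz
        exact ⟨hTA n hz'.1, Metric.mem_ball.mpr hz'.2⟩
      · exact (hTsep n).mono (Finset.coe_subset.mpr (Finset.filter_subset _ _))
    refine ⟨S2.erase x, ?_, ?_⟩
    · intro y hy hyx hconf
      refine Finset.mem_erase.mpr ⟨hyx, Finset.mem_filter.mpr ⟨hy, ?_⟩⟩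
      have hxsc := hTscale n hx
      have hysc := hTscale n hy
      have hmax : max (r x) (r y) ≤ R / 2 ^ n := max_le hxsc.2.2 hysc.2.2
      rw [dist_comm]
      exact lt_of_lt_of_le hconf hmax
    · have herase := Finset.card_erase_of_mem hxS2
      have hpos : 0 < S2.card := Finset.card_pos.mpr ⟨x, hxS2⟩
      omega
  choose col hcolspec using hcol
  -- key separation estimates
  have cross : ∀ n m, n < m → ∀ x ∈ T n, ∀ y ∈ T m,
      r x ≤ dist x y ∧ r y ≤ dist x y ∧ r x / 2 + r y / 2 ≤ dist x y := by
    intro n m hnm x hx y hy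
    have hyU := hTU m hy
    have hynb : y ∉ Metric.ball x (r x) := by
      intro hball
      exact hyU.2 (Set.mem_iUnion.mpr ⟨n, Set.mem_iUnion.mpr ⟨hnm,
        Set.mem_iUnion.mpr ⟨x, Set.mem_iUnion.mpr ⟨hx, hball⟩⟩⟩⟩)
    have h1 : r x ≤ dist y x := not_lt.mp (fun h => hynb (Metric.mem_ball.mpr h))
    rw [dist_comm] at h1
    have hxsc := hTscale n hx
    have hysc := hTscale m hy
    have h2 : r y < r x := by
      have hle : R / 2 ^ m ≤ R / 2 ^ (n + 1) := by
        apply div_le_div_of_nonneg_left hR.le (by positivity)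
        exact pow_le_pow_right₀ (by norm_num) (by omega)
      exact lt_of_le_of_lt (hysc.2.2.trans hle) hxsc.2.1
    exact ⟨h1, h2.le.trans h1, by linarith⟩
  have key : ∀ j : Fin (M ^ 4), ∀ x y : X,
      (∃ n, x ∈ T n ∧ col n x = j) → (∃ m, y ∈ T m ∧ col m y = j) → x ≠ y →
      r x ≤ dist x y ∧ r y ≤ dist x y ∧ r x / 2 + r y / 2 ≤ dist x y := by
    intro j x y hxj hyj hxy
    obtain ⟨n, hxT, hxc⟩ := hxj
    obtain ⟨m, hyT, hyc⟩ := hyj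
    rcases lt_trichotomy n m with h | rfl | h
    · exact cross n m h x hxT y hyT
    · have hncol := hcolspec n x hxT y hyT hxy
      have hnc : ¬ (dist x y < max (r x) (r y)) :=
        fun hcf => hncol hcf (hxc.trans hyc.symm)
      have hge : max (r x) (r y) ≤ dist x y := not_lt.mp hnc
      have hrx := (le_max_left (r x) (r y)).trans hge
      have hry := (le_max_right (r x) (r y)).trans hge
      exact ⟨hrx, hry, by linarith⟩
    · obtain ⟨h1, h2, h3⟩ := cross m n h y hyT x hxT
      rw [dist_comm y x] at h1 h2 h3
      exact ⟨h2, h1, by linarith⟩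
  refine ⟨fun j => ⋃ n, {x | x ∈ T n ∧ col n x = j}, ?_, ?_, ?_, ?_⟩
  · intro j
    constructor
    · apply Set.countable_iUnion
      intro n
      exact ((T n).finite_toSet.subset (fun z hz => hz.1)).countable
    · intro z hz
      obtain ⟨n, hzT, -⟩ := Set.mem_iUnion.mp hz
      exact hTA n hzT
  · intro x hx
    obtain ⟨hrx0, hrxR⟩ := hr x hx
    obtain ⟨n, hn1, hn2⟩ := exists_scale hR hrx0 hrxR
    have hxsc : x ∈ scaleSet A R r n := ⟨hx, hn1, hn2⟩
    by_cases hxU : x ∈ U n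
    · obtain ⟨c, hcT, hcd⟩ := hTmax n x hxU
      have hcsc := hTscale n hcT
      have hball : x ∈ Metric.ball c (r c) := Metric.mem_ball.mpr (lt_trans hcd hcsc.2.1)
      refine Set.mem_iUnion.mpr ⟨col n c, Set.mem_iUnion₂.mpr ⟨c, ?_, hball⟩⟩
      exact Set.mem_iUnion.mpr ⟨n, hcT, rfl⟩
    · have hxball : x ∈ ⋃ m < n, ⋃ c ∈ T m, Metric.ball c (r c) := by
        by_contra hcon
        exact hxU ⟨hxsc, hcon⟩
      simp only [Set.mem_iUnion, exists_prop] at hxball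
      obtain ⟨m, hmn, c, hcT, hcball⟩ := hxball
      refine Set.mem_iUnion.mpr ⟨col m c, Set.mem_iUnion₂.mpr ⟨c, ?_, hcball⟩⟩
      exact Set.mem_iUnion.mpr ⟨m, hcT, rfl⟩
  · intro j x hx y hy hxy
    obtain ⟨n, hxT, hxc⟩ := Set.mem_iUnion.mp hx
    obtain ⟨m, hyT, hyc⟩ := Set.mem_iUnion.mp hy
    obtain ⟨k1, k2, k3⟩ := key j x y ⟨n, hxT, hxc⟩ ⟨m, hyT, hyc⟩ hxy
    constructor
    · intro hmem
      exact absurd (Metric.mem_ball.mp hmem) (not_lt.mpr k2)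
    · intro hmem
      rw [Metric.mem_ball, dist_comm] at hmem
      exact absurd hmem (not_lt.mpr k1)
  · intro j x hx y hy hxy
    obtain ⟨n, hxT, hxc⟩ := Set.mem_iUnion.mp hx
    obtain ⟨m, hyT, hyc⟩ := Set.mem_iUnion.mp hy
    obtain ⟨k1, k2, k3⟩ := key j x y ⟨n, hxT, hxc⟩ ⟨m, hyT, hyc⟩ hxy
    rw [Set.disjoint_left]
    intro z hz1 hz2
    rw [Metric.mem_ball] at hz1 hz2
    have htri := dist_triangle x z y
    rw [dist_comm z x] at hz1
    linarith
end

section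
/- Let Ω ⊂ X be open and bounded, and let f: Ω → f(Ω) ⊂ Y be a homeomorphism with f(Ω) open and ν(f(Ω)) < ∞. Suppose there exists a Borel regular outer measure μ̃ ≥ μ on X that is doubling within Ω. Suppose there exist a μ-measurable set E ⊂ Ω and μ-measurable functions Q(x) and R(x) > 0 on Ω∖E, with Q(x) = Q for μ-a.e. x ∈ Ω∖E for some constant Q > 1, such that limsup_{r→0} μ(B(x,r))/r^{Q} < R(x)·liminf_{r→0} ν(B(f(x),r))/r^{Q} for μ-a.e. x ∈ Ω∖E, and assume x ↦ R(x)^{1/Q}·h_f(x) belongs to L^∞(Ω∖E, μ). Then lip_f(x)^Q ≤ ‖R(·)·h_f(·)^Q‖_{L^∞(Ω,μ)} · J_f(x) for μ-a.e. x ∈ Ω∖E, where the Jacobian J_f(x) := lim_{r→0} ν(f(B(x,r)))/μ(B(x,r)) exists μ-a.e. in Ω. -/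
open Set Metric MeasureTheory Filter ENNReal NNReal TopologicalSpace

noncomputable section
namespace Prop53Aux
open Set Metric MeasureTheory Filter ENNReal NNReal TopologicalSpace




lemma liminf_const_mul' {ι : Type*} {l : Filter ι} [l.NeBot] {c : ℝ≥0∞} (hc : c ≠ ⊤)
    (u : ι → ℝ≥0∞) :
    Filter.liminf (fun i => c * u i) l = c * Filter.liminf u l := by
  rcases eq_or_ne c 0 with rfl | hc0
  · simp
  apply le_antisymm
  · have h := ENNReal.liminf_mul_le (f := l) (u := fun _ => c) (v := u)
      (Or.inl (by rw [Filter.limsup_const]; exact hc0))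
      (Or.inl (by rw [Filter.limsup_const]; exact hc))
    rw [Filter.limsup_const] at h
    exact h
  · have h := ENNReal.le_liminf_mul (f := l) (u := fun _ => c) (v := u)
    rw [Filter.liminf_const] at h
    exact h

lemma exists_forall_Ioo {P : ℝ → Prop} (h : ∀ᶠ s in nhdsWithin 0 (Set.Ioi 0), P s) :
    ∃ ε > (0:ℝ), ∀ s, 0 < s → s < ε → P s := by
  rw [(nhdsGT_basis (0:ℝ)).eventually_iff] at h
  obtain ⟨ε, hε, hP⟩ := h
  exact ⟨ε, hε, fun s hs hsε => hP ⟨hs, hsε⟩⟩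

lemma eventually_nhdsGT {ε : ℝ} (hε : 0 < ε) {P : ℝ → Prop} (h : ∀ s, 0 < s → s < ε → P s) :
    ∀ᶠ s in nhdsWithin 0 (Set.Ioi 0), P s := by
  filter_upwards [Ioo_mem_nhdsGT hε] with s hs
  exact h s hs.1 hs.2

lemma image_val_ball {X : Type*} [MetricSpace X] (Ω : Set X) (z : ↥Ω) (r : ℝ) :
    (Subtype.val '' (Metric.ball z r) : Set X) = Metric.ball (z : X) r ∩ Ω := by
  ext y
  constructor
  · rintro ⟨w, hw, rfl⟩
    exact ⟨by simpa [Metric.mem_ball, Subtype.dist_eq] using hw, w.2⟩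
  · rintro ⟨hy, hyΩ⟩
    exact ⟨⟨y, hyΩ⟩, by simpa [Metric.mem_ball, Subtype.dist_eq] using hy, rfl⟩

lemma image_val_closedBall {X : Type*} [MetricSpace X] (Ω : Set X) (z : ↥Ω) (r : ℝ) :
    (Subtype.val '' (Metric.closedBall z r) : Set X) = Metric.closedBall (z : X) r ∩ Ω := by
  ext y
  constructor
  · rintro ⟨w, hw, rfl⟩
    exact ⟨by simpa [Metric.mem_closedBall, Subtype.dist_eq] using hw, w.2⟩
  · rintro ⟨hy, hyΩ⟩
    exact ⟨⟨y, hyΩ⟩, by simpa [Metric.mem_closedBall, Subtype.dist_eq] using hy, rfl⟩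

/-- Squeeze: convergence of closed-ball ratios implies convergence of open-ball ratios. -/
lemma tendsto_ball_ratio_of_closedBall {α : Type*} [MetricSpace α] [MeasurableSpace α]
    (ρ μ : Measure α) [IsFiniteMeasure ρ] [IsFiniteMeasure μ] (x : α) (L : ℝ≥0∞) (hL : L ≠ ⊤)
    (h : Tendsto (fun s => ρ (closedBall x s) / μ (closedBall x s))
      (nhdsWithin 0 (Set.Ioi 0)) (nhds L)) :
    Tendsto (fun r => ρ (ball x r) / μ (ball x r)) (nhdsWithin 0 (Set.Ioi 0)) (nhds L) := by
  have hballeq : ∀ r : ℝ, 0 < r → ball x r = ⋃ n : ℕ, closedBall x (r - r / (n + 2)) := by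
    intro r hr
    ext y
    simp only [mem_ball, mem_iUnion, mem_closedBall]
    constructor
    · intro hy
      have h1 : 0 < r - dist y x := by linarith
      obtain ⟨n, hn⟩ := exists_nat_gt (r / (r - dist y x))
      refine ⟨n, ?_⟩
      have hn2 : r / (r - dist y x) < (n : ℝ) + 2 := by
        have : (n : ℝ) ≤ (n : ℝ) + 2 := by linarith
        linarith
      have h3 : r < ((n : ℝ) + 2) * (r - dist y x) := by
        rwa [div_lt_iff₀ h1] at hn2
      have h4 : r / ((n : ℝ) + 2) < r - dist y x := by
        rw [div_lt_iff₀ (by positivity)]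
        nlinarith
      linarith
    · rintro ⟨n, hn⟩
      have : 0 < r / ((n : ℝ) + 2) := by positivity
      linarith
  have hmono : ∀ (κ : Measure α), ∀ r : ℝ, 0 < r →
      κ (ball x r) = ⨆ n : ℕ, κ (closedBall x (r - r / (n + 2))) := by
    intro κ r hr
    rw [hballeq r hr]
    apply Monotone.measure_iUnion
    intro m n hmn
    apply closedBall_subset_closedBall
    have h2 : r / ((n : ℝ) + 2) ≤ r / ((m : ℝ) + 2) := by
      apply div_le_div_of_nonneg_left hr.le (by positivity)
      exact_mod_cast by omega
    linarith
  have hsn_pos : ∀ r : ℝ, 0 < r → ∀ n : ℕ, 0 < r - r / (n + 2) := by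
    intro r hr n
    have h1 : r / ((n : ℝ) + 2) ≤ r / 2 := by
      apply div_le_div_of_nonneg_left hr.le (by norm_num)
      exact_mod_cast by omega
    have : 0 < r / 2 := by positivity
    linarith
  have hsn_lt : ∀ r : ℝ, 0 < r → ∀ n : ℕ, r - r / (n + 2) < r := by
    intro r hr n
    have : 0 < r / ((n : ℝ) + 2) := by positivity
    linarith
  by_cases hdeg : ∀ s : ℝ, 0 < s → μ (closedBall x s) ≠ 0
  · have hballpos : ∀ r : ℝ, 0 < r → μ (ball x r) ≠ 0 := by
      intro r hr
      have h1 : μ (closedBall x (r / 2)) ≤ μ (ball x r) :=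
        measure_mono (closedBall_subset_ball (by linarith))
      exact fun h0 => hdeg (r / 2) (by positivity) (le_antisymm (h0 ▸ h1) zero_le)
    rw [tendsto_order]
    constructor
    · intro a ha
      obtain ⟨c, hac, hcL⟩ := exists_between ha
      obtain ⟨ε, hε, hPc⟩ := exists_forall_Ioo (h.eventually (eventually_gt_nhds hcL))
      apply eventually_nhdsGT hε
      intro r hr hrε
      have key : c * μ (ball x r) ≤ ρ (ball x r) := by
        rw [hmono μ r hr, ENNReal.mul_iSup]
        apply iSup_le
        intro n
        have hs := hsn_pos r hr n
        have hc2 : c ≤ ρ (closedBall x (r - r / (n + 2))) / μ (closedBall x (r - r / (n + 2))) :=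
          (hPc _ hs (lt_trans (hsn_lt r hr n) hrε)).le
        calc c * μ (closedBall x (r - r / (n + 2)))
            ≤ ρ (closedBall x (r - r / (n + 2))) := ENNReal.mul_le_of_le_div hc2
          _ ≤ ρ (ball x r) := measure_mono (closedBall_subset_ball (hsn_lt r hr n))
      have : c ≤ ρ (ball x r) / μ (ball x r) := by
        rw [ENNReal.le_div_iff_mul_le (Or.inl (hballpos r hr))
          (Or.inl (measure_ne_top μ _))]
        exact key
      exact lt_of_lt_of_le hac this
    · intro b hb
      obtain ⟨c, hLc, hcb⟩ := exists_between hb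
      obtain ⟨ε, hε, hPc⟩ := exists_forall_Ioo (h.eventually (eventually_lt_nhds hLc))
      apply eventually_nhdsGT hε
      intro r hr hrε
      have key : ρ (ball x r) ≤ c * μ (ball x r) := by
        rw [hmono ρ r hr, hmono μ r hr, ENNReal.mul_iSup]
        apply iSup_mono
        intro n
        have hs := hsn_pos r hr n
        have := hPc _ hs (lt_trans (hsn_lt r hr n) hrε)
        rw [ENNReal.div_lt_iff (Or.inl (hdeg _ hs)) (Or.inl (measure_ne_top μ _))] at this
        exact this.le
      have hle : ρ (ball x r) / μ (ball x r) ≤ c := by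
        rw [ENNReal.div_le_iff_le_mul (Or.inl (hballpos r hr)) (Or.inl (measure_ne_top μ _))]
        exact key
      exact lt_of_le_of_lt hle hcb
  · push_neg at hdeg
    obtain ⟨s₀, hs₀pos, hs₀⟩ := hdeg
    have hLadd : L < L + 1 := ENNReal.lt_add_right hL one_ne_zero
    have h1 := h.eventually (eventually_lt_nhds hLadd)
    have h2 : ∀ᶠ s in nhdsWithin 0 (Set.Ioi 0), s < s₀ :=
      eventually_nhdsWithin_of_eventually_nhds (eventually_lt_nhds hs₀pos)
    have hev0 : ∀ᶠ s in nhdsWithin 0 (Set.Ioi 0),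
        ρ (closedBall x s) = 0 ∧ μ (closedBall x s) = 0 := by
      filter_upwards [h1, h2] with s hs1 hs2
      have hμ0 : μ (closedBall x s) = 0 :=
        le_antisymm (hs₀ ▸ measure_mono (closedBall_subset_closedBall hs2.le)) zero_le
      refine ⟨?_, hμ0⟩
      by_contra hρ0
      rw [hμ0, ENNReal.div_zero hρ0] at hs1
      exact (not_lt_top.2 rfl).elim (by simpa using lt_of_lt_of_le hs1 le_top |>.ne rfl)
    have hL0 : L = 0 := by
      have htend0 : Tendsto (fun s => ρ (closedBall x s) / μ (closedBall x s))
          (nhdsWithin 0 (Set.Ioi 0)) (nhds 0) := by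
        apply Tendsto.congr' _ tendsto_const_nhds
        filter_upwards [hev0] with s hs
        rw [hs.1, ENNReal.zero_div]
      exact tendsto_nhds_unique h htend0
    rw [hL0]
    obtain ⟨ε, hε, hP⟩ := exists_forall_Ioo hev0
    have heq : ∀ s : ℝ, 0 < s → s < ε → (0 : ℝ≥0∞) = ρ (ball x s) / μ (ball x s) := by
      intro r hr hrε
      have : ρ (ball x r) = 0 :=
        le_antisymm ((hP r hr hrε).1 ▸ measure_mono ball_subset_closedBall) zero_le
      rw [this, ENNReal.zero_div]
    exact Tendsto.congr' (eventually_nhdsGT hε heq) tendsto_const_nhds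


end Prop53Aux
end

noncomputable section
namespace Prop53Aux

open Set Metric MeasureTheory Filter ENNReal NNReal TopologicalSpace

/-- Existence of the volume derivative (Jacobian). -/
lemma exists_jacobian
    {X Y : Type*} [MetricSpace X] [MeasurableSpace X] [BorelSpace X] [Nonempty X]
    [MetricSpace Y] [MeasurableSpace Y] [BorelSpace Y] [TopologicalSpace.SeparableSpace Y]
    (μ : Measure X) (ν : Measure Y)
    (hμball : ∀ (x : X) (r : ℝ), μ (Metric.ball x r) < ⊤)
    (Ω : Set X) (hΩopen : IsOpen Ω) (hΩbdd : Bornology.IsBounded Ω)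
    (f : X → Y) (hf : IsHomeoOn f Ω) (hfΩopen : IsOpen (f '' Ω))
    (hνfΩ : ν (f '' Ω) < ⊤)
    (μt : Measure X) (hle : ∀ S : Set X, μ S ≤ μt S) (hdbl : DoublingWithin μt Ω) :
    ∃ J : X → ℝ≥0∞, ∀ᵐ x ∂μ.restrict Ω, J x < ⊤ ∧
        Filter.Tendsto (fun r : ℝ => ν (f '' (Metric.ball x r ∩ Ω)) / μ (Metric.ball x r))
          (nhdsWithin 0 (Set.Ioi 0)) (nhds (J x)) := by
  classical
  obtain ⟨hfc, g, hgc, hgf⟩ := hf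
  obtain ⟨Cd, hCd⟩ := hdbl
  have hfg : ∀ y ∈ f '' Ω, f (g y) = y := by rintro y ⟨x, hx, rfl⟩; rw [hgf x hx]
  have hgmem : ∀ y ∈ f '' Ω, g y ∈ Ω := by rintro y ⟨x, hx, rfl⟩; rw [hgf x hx]; exact hx
  -- separability of Ω
  haveI : SecondCountableTopology Y := UniformSpace.secondCountable_of_separable Y
  let G : ↥(f '' Ω) → ↥Ω := fun y => ⟨g y.1, hgmem y.1 y.2⟩
  have hGc : Continuous G := Continuous.subtype_mk (ContinuousOn.restrict hgc) _
  have hGsurj : Function.Surjective G := fun z =>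
    ⟨⟨f z.1, mem_image_of_mem f z.2⟩, Subtype.ext (hgf z.1 z.2)⟩
  haveI : SeparableSpace ↥Ω := by
    obtain ⟨D, hDc, hDd⟩ := TopologicalSpace.exists_countable_dense ↥(f '' Ω)
    exact ⟨⟨G '' D, hDc.image G, hGsurj.denseRange.dense_image hGc hDd⟩⟩
  haveI : SecondCountableTopology ↥Ω := UniformSpace.secondCountable_of_separable _
  -- the embedding z ↦ f z
  have hFc : Continuous (fun z : ↥Ω => f z.1) := ContinuousOn.restrict hfc
  let F' : ↥Ω ≃ₜ ↥(f '' Ω) :=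
    { toFun := fun z => ⟨f z.1, mem_image_of_mem f z.2⟩
      invFun := G
      left_inv := fun z => Subtype.ext (hgf z.1 z.2)
      right_inv := fun y => Subtype.ext (hfg y.1 y.2)
      continuous_toFun := hFc.subtype_mk _
      continuous_invFun := hGc }
  have hval : MeasurableEmbedding (Subtype.val : ↥Ω → X) :=
    MeasurableEmbedding.subtype_coe hΩopen.measurableSet
  have hvalY : MeasurableEmbedding (Subtype.val : ↥(f '' Ω) → Y) :=
    MeasurableEmbedding.subtype_coe hfΩopen.measurableSet
  have hFemb : MeasurableEmbedding (fun z : ↥Ω => f z.1) := by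
    have : (fun z : ↥Ω => f z.1) = (Subtype.val : ↥(f '' Ω) → Y) ∘ F' := rfl
    rw [this]
    exact hvalY.comp F'.measurableEmbedding
  -- measures on the subtype
  set μ' : Measure ↥Ω := μ.comap Subtype.val with hμ'def
  set μt' : Measure ↥Ω := μt.comap Subtype.val with hμt'def
  set ρ' : Measure ↥Ω := ν.comap (fun z : ↥Ω => f z.1) with hρ'def
  have hμ'app : ∀ s : Set ↥Ω, μ' s = μ (Subtype.val '' s) := fun s => hval.comap_apply μ s
  have hμt'app : ∀ s : Set ↥Ω, μt' s = μt (Subtype.val '' s) := fun s => hval.comap_apply μt s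
  have hρ'app : ∀ s : Set ↥Ω, ρ' s = ν (f '' (Subtype.val '' s)) := by
    intro s
    rw [hFemb.comap_apply ν s]
    congr 1
    rw [show (fun z : ↥Ω => f z.1) = f ∘ Subtype.val from rfl, image_comp]
  have hμΩfin : μ Ω < ⊤ := by
    obtain ⟨x₀⟩ := (inferInstance : Nonempty X)
    obtain ⟨R, hR⟩ := hΩbdd.subset_closedBall x₀
    calc μ Ω ≤ μ (closedBall x₀ R) := measure_mono hR
      _ ≤ μ (ball x₀ (R + 1)) := measure_mono (closedBall_subset_ball (lt_add_one R))
      _ < ⊤ := hμball x₀ (R + 1)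
  haveI : IsFiniteMeasure μ' := by
    constructor
    rw [hμ'app, image_univ, Subtype.range_coe]
    exact hμΩfin
  haveI : IsFiniteMeasure ρ' := by
    constructor
    rw [hρ'app, image_univ, Subtype.range_coe]
    exact hνfΩ
  haveI : IsLocallyFiniteMeasure μt' := by
    constructor
    intro z
    obtain ⟨ε, hε, hball⟩ := Metric.isOpen_iff.1 hΩopen z.1 z.2
    refine ⟨ball z (ε / 2), ball_mem_nhds z (by linarith), ?_⟩
    have h1 : μt' (ball z (ε / 2)) ≤ μt (Metric.ball (z : X) (ε / 2)) := by
      rw [hμt'app, image_val_ball]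
      exact measure_mono inter_subset_left
    have h2 := (hCd z.1 (ε / 4) (by linarith)
      (fun w hw => hball (by simpa using lt_of_lt_of_le (mem_ball.1 hw) (by linarith)))).2.2
    rw [show 2 * (ε / 4) = ε / 2 by ring] at h2
    exact lt_of_le_of_lt h1 h2
  -- the doubling property of μt' along closed balls inside Ω
  have hkey : ∀ z : ↥Ω, ∀ s : ℝ, 0 < s → Metric.ball (z : X) (2 * s) ⊆ Ω →
      μt' (closedBall z (3 * s)) ≤ ((Cd ^ 2 : ℝ≥0) : ℝ≥0∞) * μt' (closedBall z s) := by
    intro z s hs h2s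
    have hsub1 : Metric.ball (z : X) s ⊆ Ω := fun w hw => h2s (by
      simp only [mem_ball] at *; linarith)
    have hd1 := (hCd z.1 (2 * s) (by linarith) h2s).2.1
    have hd2 := (hCd z.1 s hs hsub1).2.1
    have hchain : μt (Metric.ball (z : X) (2 * (2 * s))) ≤
        (Cd : ℝ≥0∞) * ((Cd : ℝ≥0∞) * μt (Metric.ball (z : X) s)) :=
      le_trans hd1 (mul_le_mul_right hd2 _)
    have h1 : μt' (closedBall z (3 * s)) ≤ μt (Metric.ball (z : X) (2 * (2 * s))) := by
      rw [hμt'app, image_val_closedBall]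
      refine measure_mono (fun w hw => ?_)
      have := hw.1
      simp only [mem_closedBall] at this
      simp only [mem_ball]
      linarith
    have h2 : μt (Metric.ball (z : X) s) ≤ μt' (closedBall z s) := by
      rw [hμt'app, image_val_closedBall]
      exact measure_mono (fun w hw => ⟨ball_subset_closedBall hw, hsub1 hw⟩)
    calc μt' (closedBall z (3 * s)) ≤ (Cd : ℝ≥0∞) * ((Cd : ℝ≥0∞) * μt (Metric.ball (z : X) s)) :=
          le_trans h1 hchain
      _ ≤ (Cd : ℝ≥0∞) * ((Cd : ℝ≥0∞) * μt' (closedBall z s)) := by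
          exact mul_le_mul_right (mul_le_mul_right h2 _) _
      _ = ((Cd ^ 2 : ℝ≥0) : ℝ≥0∞) * μt' (closedBall z s) := by
          rw [ENNReal.coe_pow, sq, mul_assoc]
  have hsmall : ∀ z : ↥Ω, ∀ᶠ s in nhdsWithin (0:ℝ) (Set.Ioi 0),
      0 < s ∧ Metric.ball (z : X) (2 * s) ⊆ Ω := by
    intro z
    obtain ⟨ε, hε, hball⟩ := Metric.isOpen_iff.1 hΩopen z.1 z.2
    apply eventually_nhdsGT (show (0:ℝ) < ε / 2 by linarith)
    intro s hs hsε
    exact ⟨hs, fun w hw => hball (by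
      simp only [mem_ball] at *; linarith)⟩
  have hfreq : ∀ z : ↥Ω, ∃ᶠ s in nhdsWithin (0:ℝ) (Set.Ioi 0),
      μt' (closedBall z (3 * s)) ≤ ((Cd ^ 2 : ℝ≥0) : ℝ≥0∞) * μt' (closedBall z s) := by
    intro z
    exact ((hsmall z).mono (fun s hs => hkey z s hs.1 hs.2)).frequently
  have hμ'le : μ' ≤ μt' := by
    rw [Measure.le_iff]
    intro s _
    rw [hμ'app, hμt'app]
    exact hle _
  let v : VitaliFamily μ' :=
    (Vitali.vitaliFamily μt' (Cd ^ 2) hfreq).mono μ' hμ'le.absolutelyContinuous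
  have hsetsAt : ∀ z : ↥Ω, ∀ᶠ s in nhdsWithin (0:ℝ) (Set.Ioi 0),
      closedBall z s ∈ v.setsAt z := by
    intro z
    filter_upwards [hsmall z] with s hs
    refine ⟨isClosed_closedBall, ⟨z, ball_subset_interior_closedBall (mem_ball_self hs.1)⟩,
      ⟨s, Subset.rfl, hkey z s hs.1 hs.2⟩⟩
  have hdiff := v.ae_tendsto_rnDeriv ρ'
  have hlt := Measure.rnDeriv_lt_top ρ' μ'
  refine ⟨fun x => if h : x ∈ Ω then ρ'.rnDeriv μ' ⟨x, h⟩ else 0, ?_⟩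
  have hmapeq : μ.restrict Ω = Measure.map Subtype.val μ' := by
    rw [hval.map_comap, Subtype.range_coe]
  rw [hmapeq, hval.ae_map_iff]
  filter_upwards [hdiff, hlt] with z hz hzlt
  have hJz : (if h : (z : X) ∈ Ω then ρ'.rnDeriv μ' ⟨(z : X), h⟩ else 0) = ρ'.rnDeriv μ' z := by
    rw [dif_pos z.2]
  rw [hJz]
  refine ⟨hzlt, ?_⟩
  -- closed ball ratios converge
  have hcb : Tendsto (fun s : ℝ => closedBall z s) (nhdsWithin 0 (Set.Ioi 0)) (v.filterAt z) := by
    rw [v.tendsto_filterAt_iff]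
    refine ⟨hsetsAt z, fun ε hε => ?_⟩
    filter_upwards [Ioo_mem_nhdsGT hε] with s hs
    exact closedBall_subset_closedBall hs.2.le
  have h1 : Tendsto (fun s : ℝ => ρ' (closedBall z s) / μ' (closedBall z s))
      (nhdsWithin 0 (Set.Ioi 0)) (nhds (ρ'.rnDeriv μ' z)) := hz.comp hcb
  have h2 := tendsto_ball_ratio_of_closedBall ρ' μ' z _ hzlt.ne h1
  -- transfer to the ambient space
  obtain ⟨ε, hε, hball⟩ := Metric.isOpen_iff.1 hΩopen z.1 z.2
  apply h2.congr'
  apply eventually_nhdsGT hε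
  intro r hr hrε
  have hsub : Metric.ball (z : X) r ⊆ Ω := fun w hw =>
    hball (by simp only [mem_ball] at *; linarith)
  have e1 : ρ' (ball z r) = ν (f '' (Metric.ball (z : X) r ∩ Ω)) := by
    rw [hρ'app, image_val_ball]
  have e2 : μ' (ball z r) = μ (Metric.ball (z : X) r) := by
    rw [hμ'app, image_val_ball, inter_eq_self_of_subset_left hsub]
  show ρ' (ball z r) / μ' (ball z r) =
    ν (f '' (Metric.ball (z : X) r ∩ Ω)) / μ (Metric.ball (z : X) r)
  rw [e1, e2]

end Prop53Aux

end

noncomputable section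
namespace Prop53Aux

open Set Metric MeasureTheory Filter ENNReal NNReal TopologicalSpace

lemma key_pointwise
    {X Y : Type*} [MetricSpace X] [MeasurableSpace X] [MetricSpace Y] [MeasurableSpace Y]
    (μ : Measure X) (ν : Measure Y) (Ω : Set X) (f : X → Y) (hfΩopen : IsOpen (f '' Ω))
    (Q : ℝ) (hQ : 1 < Q) (R : ℝ≥0∞) (hR0 : R ≠ 0) (hRtop : R ≠ ⊤) (S Jx : ℝ≥0∞)
    (x : X) (hx : x ∈ Ω) (x' : X) (hx' : x' ∈ Ω) (hxx : x' ≠ x)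
    (hμfin : ∀ r : ℝ, μ (Metric.ball x r) < ⊤)
    (hA : hDil f Ω x ≠ ⊤)
    (hS : R * hDil f Ω x ^ Q ≤ S)
    (hJ : Filter.Tendsto (fun r : ℝ => ν (f '' (Metric.ball x r ∩ Ω)) / μ (Metric.ball x r))
      (nhdsWithin 0 (Set.Ioi 0)) (nhds Jx))
    (hJfin : Jx ≠ ⊤)
    (hae1 : Filter.limsup (fun r : ℝ => μ (Metric.ball x r) / ENNReal.ofReal (r ^ Q))
        (nhdsWithin 0 (Set.Ioi 0))
      < R * Filter.liminf (fun t : ℝ => ν (Metric.ball (f x) t) / ENNReal.ofReal (t ^ Q))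
        (nhdsWithin 0 (Set.Ioi 0))) :
    elip f Ω x ^ Q ≤ S * Jx := by
  classical
  have hQ0 : (0:ℝ) < Q := lt_trans one_pos hQ
  set A := hDil f Ω x with hAdef
  set Lν := Filter.liminf (fun t : ℝ => ν (Metric.ball (f x) t) / ENNReal.ofReal (t ^ Q))
    (nhdsWithin 0 (Set.Ioi 0)) with hLνdef
  set Lμ := Filter.limsup (fun r : ℝ => μ (Metric.ball x r) / ENNReal.ofReal (r ^ Q))
    (nhdsWithin 0 (Set.Ioi 0)) with hLμdef
  have hLν0 : Lν ≠ 0 := by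
    intro h
    rw [h, mul_zero] at hae1
    exact absurd hae1 (by simp)
  have hLμtop : Lμ ≠ ⊤ := ne_top_of_lt hae1
  have hdist : 0 < dist x' x := dist_pos.2 hxx
  obtain ⟨ε₀, hε₀, hballY⟩ := Metric.isOpen_iff.1 hfΩopen (f x) (mem_image_of_mem f hx)
  -- construction of the sequence rₙ
  have hfreqn : ∀ n : ℕ, ∃ s : ℝ, 0 < s ∧ s < min ((1/((n:ℝ)+1))^2) (dist x' x) ∧
      eH f Ω x s < A + 1/((n:ℕ)+1) := by
    intro n
    have hδ : (0:ℝ) < min ((1/((n:ℝ)+1))^2) (dist x' x) := lt_min (by positivity) hdist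
    have h1 : ∃ᶠ s in nhdsWithin (0:ℝ) (Set.Ioi 0), eH f Ω x s < A + 1/((n:ℕ)+1) := by
      by_contra hcon
      rw [Filter.not_frequently] at hcon
      have h2 : A + 1/((n:ℕ)+1) ≤ Filter.liminf (fun s => eH f Ω x s)
          (nhdsWithin (0:ℝ) (Set.Ioi 0)) :=
        Filter.le_liminf_of_le (by isBoundedDefault) (hcon.mono (fun s hs => not_lt.1 hs))
      have h3 : A < A + 1/((n:ℕ)+1) := by
        apply ENNReal.lt_add_right hA
        simp
      rw [hAdef] at h3
      exact absurd (le_trans h2 (le_of_eq rfl)) (not_le.2 (lt_of_lt_of_le h3 (le_of_eq rfl)))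
    obtain ⟨s, hs1, hs2⟩ := (h1.and_eventually (Ioo_mem_nhdsGT hδ)).exists
    exact ⟨s, hs2.1, hs2.2, hs1⟩
  choose r hr0 hrlt hrH using hfreqn
  have hrlt1 : ∀ n, r n < (1/((n:ℝ)+1))^2 := fun n => lt_of_lt_of_le (hrlt n) (min_le_left _ _)
  have hrltd : ∀ n, r n < dist x' x := fun n => lt_of_lt_of_le (hrlt n) (min_le_right _ _)
  have hsq_tend : Tendsto (fun n : ℕ => (1/((n:ℝ)+1))^2) atTop (nhds 0) := by
    have h := tendsto_one_div_add_atTop_nhds_zero_nat (𝕜 := ℝ)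
    simpa [pow_two] using h.mul h
  have hr_tend0 : Tendsto r atTop (nhds (0:ℝ)) :=
    squeeze_zero (fun n => (hr0 n).le) (fun n => (hrlt1 n).le) hsq_tend
  have hrtend : Tendsto r atTop (nhdsWithin (0:ℝ) (Set.Ioi 0)) :=
    tendsto_nhdsWithin_iff.2 ⟨hr_tend0, Filter.Eventually.of_forall (fun n => hr0 n)⟩
  -- basic facts about l and H along the sequence
  have hHtop : ∀ n, eH f Ω x (r n) ≠ ⊤ := fun n => ne_top_of_lt (hrH n)
  have hel0 : ∀ n, el f Ω x (r n) ≠ 0 := by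
    intro n h
    exact hHtop n (by rw [eH, if_pos h])
  have hel_le : ∀ n, el f Ω x (r n) ≤ edist (f x') (f x) := by
    intro n
    refine le_trans (iInf_le _ x') ?_
    refine le_trans (iInf_le _ hx') ?_
    exact iInf_le _ (hrltd n).le
  have heltop : ∀ n, el f Ω x (r n) ≠ ⊤ := fun n =>
    ne_top_of_le_ne_top (edist_ne_top _ _) (hel_le n)
  have heL : ∀ n, eL f Ω x (r n) = eH f Ω x (r n) * el f Ω x (r n) := by
    intro n
    rw [eH, if_neg (hel0 n), ENNReal.div_mul_cancel (hel0 n) (heltop n)]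
  -- the truncated radii t n
  set t : ℕ → ℝ≥0∞ := fun n => min (el f Ω x (r n)) (ENNReal.ofReal (Real.sqrt (r n)))
    with htdef
  have ht0 : ∀ n, t n ≠ 0 := by
    intro n
    have h1 : 0 < el f Ω x (r n) := pos_iff_ne_zero.2 (hel0 n)
    have h2 : 0 < ENNReal.ofReal (Real.sqrt (r n)) :=
      ENNReal.ofReal_pos.2 (Real.sqrt_pos.2 (hr0 n))
    exact (lt_min h1 h2).ne'
  have httop : ∀ n, t n ≠ ⊤ := fun n =>
    ne_top_of_le_ne_top ENNReal.ofReal_ne_top (min_le_right _ _)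
  set treal : ℕ → ℝ := fun n => (t n).toReal with htrealdef
  have htreal_pos : ∀ n, 0 < treal n := fun n => ENNReal.toReal_pos (ht0 n) (httop n)
  have htreal_le : ∀ n, treal n ≤ Real.sqrt (r n) := fun n =>
    ENNReal.toReal_le_of_le_ofReal (Real.sqrt_nonneg _) (min_le_right _ _)
  have hofReal_treal : ∀ n, ENNReal.ofReal (treal n) = t n := fun n =>
    ENNReal.ofReal_toReal (httop n)
  have hsqrt_tend : Tendsto (fun n => Real.sqrt (r n)) atTop (nhds 0) := by
    have := (Real.continuous_sqrt.tendsto 0).comp hr_tend0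
    simpa [Function.comp_def] using this
  have htreal_tend0 : Tendsto treal atTop (nhds (0:ℝ)) :=
    squeeze_zero (fun n => (htreal_pos n).le) htreal_le hsqrt_tend
  have htreal_tend : Tendsto treal atTop (nhdsWithin (0:ℝ) (Set.Ioi 0)) :=
    tendsto_nhdsWithin_iff.2 ⟨htreal_tend0, Filter.Eventually.of_forall htreal_pos⟩
  -- inclusion of balls
  have hincl : ∀ᶠ n in atTop,
      Metric.ball (f x) (treal n) ⊆ f '' (Metric.ball x (r n) ∩ Ω) := by
    filter_upwards [hsqrt_tend.eventually (eventually_lt_nhds hε₀)] with n hn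
    intro y hy
    have hyd : dist y (f x) < treal n := mem_ball.1 hy
    have hyε : y ∈ Metric.ball (f x) ε₀ :=
      mem_ball.2 (lt_of_lt_of_le hyd ((htreal_le n).trans hn.le))
    obtain ⟨zz, hzz, rfl⟩ := hballY hyε
    refine ⟨zz, ⟨?_, hzz⟩, rfl⟩
    by_contra hge
    rw [mem_ball, not_lt] at hge
    have h1 : el f Ω x (r n) ≤ edist (f zz) (f x) := by
      refine le_trans (iInf_le _ zz) ?_
      refine le_trans (iInf_le _ hzz) ?_
      exact iInf_le _ hge
    have h2 : edist (f zz) (f x) < t n := by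
      rw [← hofReal_treal n]
      exact edist_lt_ofReal.2 hyd
    exact lt_irrefl _ (lt_of_lt_of_le (lt_of_le_of_lt h1 h2) (min_le_left _ _))
  -- named sequences
  set Rt : ℕ → ℝ≥0∞ :=
    fun n => ν (f '' (Metric.ball x (r n) ∩ Ω)) / μ (Metric.ball x (r n)) with hRtdef
  set m : ℕ → ℝ≥0∞ := fun n => μ (Metric.ball x (r n)) / ENNReal.ofReal ((r n) ^ Q) with hmdef
  set u : ℕ → ℝ≥0∞ := fun n => ν (Metric.ball (f x) (treal n)) / t n ^ Q with hudef
  set w : ℕ → ℝ≥0∞ := fun n => (t n / ENNReal.ofReal (r n)) ^ Q with hwdef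
  have hRt_lim : Tendsto Rt atTop (nhds Jx) := hJ.comp hrtend
  have hRatio : ∀ᶠ n in atTop, Rt n < Jx + 1 :=
    hRt_lim.eventually (eventually_lt_nhds (ENNReal.lt_add_right hJfin one_ne_zero))
  -- pointwise inequality
  have hmain : ∀ᶠ n in atTop, u n * w n ≤ Rt n * m n := by
    filter_upwards [hincl, hRatio] with n hn hRn
    have htQ0 : t n ^ Q ≠ 0 := (ENNReal.rpow_pos (pos_iff_ne_zero.2 (ht0 n)) (httop n)).ne'
    have htQtop : t n ^ Q ≠ ⊤ := ENNReal.rpow_ne_top_of_nonneg hQ0.le (httop n)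
    have hid : u n * w n = ν (Metric.ball (f x) (treal n)) / ENNReal.ofReal ((r n) ^ Q) := by
      have hw' : w n = t n ^ Q / ENNReal.ofReal ((r n) ^ Q) := by
        rw [hwdef]
        simp only []
        rw [ENNReal.div_rpow_of_nonneg _ _ hQ0.le, ENNReal.ofReal_rpow_of_pos (hr0 n)]
      rw [hudef, hw']
      simp only []
      rw [← mul_div_assoc, ENNReal.div_mul_cancel htQ0 htQtop]
    rw [hid]
    have hle1 : ν (Metric.ball (f x) (treal n)) / ENNReal.ofReal ((r n) ^ Q) ≤
        ν (f '' (Metric.ball x (r n) ∩ Ω)) / ENNReal.ofReal ((r n) ^ Q) :=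
      ENNReal.div_le_div_right (measure_mono hn) _
    refine le_trans hle1 ?_
    by_cases hb : μ (Metric.ball x (r n)) = 0
    · have hν0 : ν (f '' (Metric.ball x (r n) ∩ Ω)) = 0 := by
        by_contra hν
        rw [hRtdef] at hRn
        simp only [hb, ENNReal.div_zero hν] at hRn
        exact absurd hRn (by simp [ENNReal.add_ne_top, hJfin])
      rw [hν0, ENNReal.zero_div]
      exact zero_le
    · have hcancel : Rt n * μ (Metric.ball x (r n)) = ν (f '' (Metric.ball x (r n) ∩ Ω)) :=
        ENNReal.div_mul_cancel hb (hμfin (r n)).ne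
      rw [hmdef]
      simp only []
      rw [← mul_div_assoc, hcancel]
  -- liminf manipulations
  set Λ' := Filter.liminf (fun n => t n / ENNReal.ofReal (r n)) atTop with hΛ'def
  have hw_eq : Filter.liminf w atTop = Λ' ^ Q := by
    have hmono := ENNReal.monotone_rpow_of_nonneg hQ0.le
    have hcont : ContinuousAt (fun z : ℝ≥0∞ => z ^ Q)
        (Filter.liminf (fun n => t n / ENNReal.ofReal (r n)) atTop) :=
      ENNReal.continuous_rpow_const.continuousAt
    have hmap := hmono.map_liminf_of_continuousAt
      (F := atTop) (fun n => t n / ENNReal.ofReal (r n)) hcont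
    rw [hΛ'def, hmap]
    rfl
  have hu_ge : Lν ≤ Filter.liminf u atTop := by
    have hcomp : u = (fun s : ℝ => ν (Metric.ball (f x) s) / ENNReal.ofReal (s ^ Q)) ∘ treal := by
      funext n
      simp only [Function.comp, hudef]
      congr 1
      rw [← hofReal_treal n, ← ENNReal.ofReal_rpow_of_pos (htreal_pos n)]
    rw [hLνdef, hcomp, Filter.liminf_comp]
    exact Filter.liminf_le_liminf_of_le htreal_tend
  have hfinal : Lν * Λ' ^ Q ≤ Jx * Lμ := by
    have h1 : Lν * Λ' ^ Q ≤ Filter.liminf u atTop * Filter.liminf w atTop :=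
      mul_le_mul' hu_ge (le_of_eq hw_eq.symm)
    have h2 : Filter.liminf u atTop * Filter.liminf w atTop ≤
        Filter.liminf (fun n => u n * w n) atTop := ENNReal.le_liminf_mul
    have h3 : Filter.liminf (fun n => u n * w n) atTop ≤
        Filter.liminf (fun n => Rt n * m n) atTop :=
      Filter.liminf_le_liminf hmain
    have hm_le : Filter.liminf m atTop ≤ Lμ := by
      refine le_trans Filter.liminf_le_limsup ?_
      have hcompm : m = (fun s : ℝ => μ (Metric.ball x s) / ENNReal.ofReal (s ^ Q)) ∘ r := rfl
      rw [hLμdef, hcompm, Filter.limsup_comp]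
      exact Filter.limsup_le_limsup_of_le hrtend
    have h4 : Filter.liminf (fun n => Rt n * m n) atTop ≤
        Filter.limsup Rt atTop * Filter.liminf m atTop := by
      apply ENNReal.liminf_mul_le
      · exact Or.inr (ne_top_of_le_ne_top hLμtop hm_le)
      · exact Or.inl (by rw [hRt_lim.limsup_eq]; exact hJfin)
    rw [hRt_lim.limsup_eq] at h4
    exact le_trans h1 (le_trans h2 (le_trans h3 (le_trans h4 (mul_le_mul_right hm_le Jx))))
  -- Λ ≤ Λ'
  set Λ := Filter.liminf (fun n => el f Ω x (r n) / ENNReal.ofReal (r n)) atTop with hΛdef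
  have hs_top : Tendsto (fun n => ENNReal.ofReal (Real.sqrt (r n)) / ENNReal.ofReal (r n))
      atTop (nhds ⊤) := by
    have heq : ∀ n, ENNReal.ofReal (Real.sqrt (r n)) / ENNReal.ofReal (r n)
        = ENNReal.ofReal ((Real.sqrt (r n))⁻¹) := by
      intro n
      rw [← ENNReal.ofReal_div_of_pos (hr0 n), Real.sqrt_div_self]
    have hsqrt_tendW : Tendsto (fun n => Real.sqrt (r n)) atTop
        (nhdsWithin (0:ℝ) (Set.Ioi 0)) :=
      tendsto_nhdsWithin_iff.2 ⟨hsqrt_tend,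
        Filter.Eventually.of_forall (fun n => Real.sqrt_pos.2 (hr0 n))⟩
    have hinv : Tendsto (fun n => (Real.sqrt (r n))⁻¹) atTop atTop :=
      tendsto_inv_nhdsGT_zero.comp hsqrt_tendW
    have := ENNReal.tendsto_ofReal_atTop.comp hinv
    exact Tendsto.congr (fun n => (heq n).symm) this
  have hΛΛ' : Λ ≤ Λ' := by
    by_contra hcon
    push_neg at hcon
    obtain ⟨c, hc1, hc2⟩ := exists_between hcon
    have hctop : c ≠ ⊤ := ne_top_of_lt hc2
    have h1 : ∀ᶠ n in atTop, c < el f Ω x (r n) / ENNReal.ofReal (r n) :=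
      Filter.eventually_lt_of_lt_liminf hc2
    have h2 : ∀ᶠ n in atTop, c < ENNReal.ofReal (Real.sqrt (r n)) / ENNReal.ofReal (r n) :=
      hs_top.eventually (eventually_gt_nhds (lt_top_iff_ne_top.2 hctop))
    have h3 : c ≤ Λ' := by
      apply Filter.le_liminf_of_le (by isBoundedDefault)
      filter_upwards [h1, h2] with n hn1 hn2
      have hminq : t n / ENNReal.ofReal (r n) =
          min (el f Ω x (r n) / ENNReal.ofReal (r n))
            (ENNReal.ofReal (Real.sqrt (r n)) / ENNReal.ofReal (r n)) := by
        rw [htdef]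
        simp only []
        rcases le_total (el f Ω x (r n)) (ENNReal.ofReal (Real.sqrt (r n))) with h | h
        · rw [min_eq_left h, min_eq_left (ENNReal.div_le_div_right h _)]
        · rw [min_eq_right h, min_eq_right (ENNReal.div_le_div_right h _)]
      rw [hminq]
      exact le_min hn1.le hn2.le
    exact absurd h3 (not_le.2 hc1)
  -- Λ' is finite (otherwise Jx * Lμ = ⊤)
  have hJLμtop : Jx * Lμ ≠ ⊤ := ENNReal.mul_ne_top hJfin hLμtop
  have hΛ'top : Λ' ≠ ⊤ := by
    intro htop
    rw [htop, ENNReal.top_rpow_of_pos hQ0, ENNReal.mul_top hLν0] at hfinal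
    exact hJLμtop (top_le_iff.1 hfinal)
  have hΛtop : Λ ≠ ⊤ := ne_top_of_le_ne_top hΛ'top hΛΛ'
  -- Step 1 : elip ≤ A * Λ
  have hstep1 : ∀ k : ℕ, elip f Ω x ≤ (A + 1/((k:ℕ)+1)) * Λ := by
    intro k
    have h1 : elip f Ω x ≤ Filter.liminf
        (fun n => (⨆ y ∈ Ω ∩ Metric.ball x (r n), edist (f y) (f x))
          / ENNReal.ofReal (r n)) atTop := by
      rw [elip]
      have hcomp : (fun n => (⨆ y ∈ Ω ∩ Metric.ball x (r n), edist (f y) (f x))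
          / ENNReal.ofReal (r n)) = (fun s : ℝ =>
          (⨆ y ∈ Ω ∩ Metric.ball x s, edist (f y) (f x)) / ENNReal.ofReal s) ∘ r := rfl
      rw [hcomp, Filter.liminf_comp]
      exact Filter.liminf_le_liminf_of_le hrtend
    have h2 : Filter.liminf
        (fun n => (⨆ y ∈ Ω ∩ Metric.ball x (r n), edist (f y) (f x))
          / ENNReal.ofReal (r n)) atTop ≤
        Filter.liminf (fun n => eL f Ω x (r n) / ENNReal.ofReal (r n)) atTop := by
      refine Filter.liminf_le_liminf (Filter.Eventually.of_forall (fun n => ?_))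
      apply ENNReal.div_le_div_right
      apply iSup₂_le
      intro y hy
      rw [eL]
      exact le_iSup_of_le y (le_iSup_of_le hy.1
        (le_iSup_of_le (mem_ball.1 hy.2).le le_rfl))
    have h3 : Filter.liminf (fun n => eL f Ω x (r n) / ENNReal.ofReal (r n)) atTop ≤
        (A + 1/((k:ℕ)+1)) * Λ := by
      have hev : ∀ᶠ n in atTop, eL f Ω x (r n) / ENNReal.ofReal (r n) ≤
          (A + 1/((k:ℕ)+1)) * (el f Ω x (r n) / ENNReal.ofReal (r n)) := by
        rw [Filter.eventually_atTop]
        refine ⟨k, fun n hn => ?_⟩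
        rw [heL n, mul_div_assoc]
        apply mul_le_mul_left
        refine le_trans (hrH n).le ?_
        apply add_le_add le_rfl
        rw [one_div, one_div]
        apply ENNReal.inv_le_inv.2
        exact add_le_add_left (by exact_mod_cast hn) 1
      refine le_trans (Filter.liminf_le_liminf hev) ?_
      rw [liminf_const_mul' (by
        refine ENNReal.add_ne_top.2 ⟨hA, ?_⟩
        simp)]
    exact le_trans h1 (le_trans h2 h3)
  have hAΛ : elip f Ω x ≤ A * Λ := by
    apply ENNReal.le_of_forall_pos_le_add
    intro ε hε _
    rcases eq_or_ne Λ 0 with hΛ0 | hΛ0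
    · have := hstep1 0
      rw [hΛ0, mul_zero] at this
      exact le_trans this zero_le
    · have hδ : (ε : ℝ≥0∞) / Λ ≠ 0 :=
        (ENNReal.div_pos (by exact_mod_cast hε.ne') hΛtop).ne'
      obtain ⟨kk, hkk⟩ := ENNReal.exists_inv_nat_lt hδ
      have hkk1 : (1 : ℝ≥0∞)/((kk:ℕ)+1) ≤ ((kk:ℕ) : ℝ≥0∞)⁻¹ := by
        rw [one_div]
        apply ENNReal.inv_le_inv.2
        exact le_add_right le_rfl
      have hsmall : (1 : ℝ≥0∞)/((kk:ℕ)+1) * Λ ≤ ε := by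
        have h1 : (1 : ℝ≥0∞)/((kk:ℕ)+1) * Λ ≤ ((ε : ℝ≥0∞) / Λ) * Λ :=
          mul_le_mul_left (le_of_lt (lt_of_le_of_lt hkk1 hkk)) Λ
        rwa [ENNReal.div_mul_cancel hΛ0 hΛtop] at h1
      calc elip f Ω x ≤ (A + 1/((kk:ℕ)+1)) * Λ := hstep1 kk
        _ = A * Λ + (1/((kk:ℕ)+1)) * Λ := by rw [add_mul]
        _ ≤ A * Λ + ε := add_le_add le_rfl hsmall
  -- conclusion
  rcases eq_or_ne Lν ⊤ with hLνtop | hLνtop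
  · have hΛ'0 : Λ' = 0 := by
      by_contra h0
      have hQne : Λ' ^ Q ≠ 0 := (ENNReal.rpow_pos (pos_iff_ne_zero.2 h0) hΛ'top).ne'
      rw [hLνtop, ENNReal.top_mul (by
        intro hc
        exact hQne hc)] at hfinal
      exact hJLμtop (top_le_iff.1 hfinal)
    have helip0 : elip f Ω x = 0 := by
      have := le_trans hAΛ (mul_le_mul_right (le_trans hΛΛ' (le_of_eq hΛ'0)) A)
      simpa using this
    rw [helip0, ENNReal.zero_rpow_of_pos hQ0]
    exact zero_le
  · have hΛ'Q : Λ' ^ Q ≤ Jx * R := by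
      have h1 : Jx * Lμ ≤ Jx * (R * Lν) := mul_le_mul_right hae1.le _
      have h2 : Λ' ^ Q * Lν ≤ (Jx * R) * Lν := by
        rw [mul_comm (Λ' ^ Q) Lν]
        refine le_trans hfinal (le_trans h1 (le_of_eq (by ring)))
      exact (ENNReal.mul_le_mul_iff_left hLν0 hLνtop).1 h2
    calc elip f Ω x ^ Q ≤ (A * Λ') ^ Q := by
          apply ENNReal.rpow_le_rpow _ hQ0.le
          exact le_trans hAΛ (mul_le_mul_right hΛΛ' A)
      _ = A ^ Q * Λ' ^ Q := ENNReal.mul_rpow_of_nonneg _ _ hQ0.le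
      _ ≤ A ^ Q * (Jx * R) := mul_le_mul_right hΛ'Q _
      _ = (R * A ^ Q) * Jx := by ring
      _ ≤ S * Jx := mul_le_mul_left hS _

end Prop53Aux
end

/-- Proposition 5.3 (second part, with `Q(x) ≡ Q`): the pointwise inequality
`lip_f(x)^Q ≤ ‖R h_f^Q‖_{L^∞(Ω)} J_f(x)` for `μ`-a.e. `x ∈ Ω ∖ E`, where the
Jacobian `J_f` exists `μ`-a.e. in `Ω`. -/
theorem lip_pow_le_essSup_mul_jacobian
    {X Y : Type*} [MetricSpace X] [MeasurableSpace X] [BorelSpace X]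
    [ConnectedSpace X] [Nontrivial X]
    [MetricSpace Y] [MeasurableSpace Y] [BorelSpace Y] [TopologicalSpace.SeparableSpace Y]
    (μ : Measure X) (ν : Measure Y)
    (hμball : ∀ (x : X) (r : ℝ), μ (Metric.ball x r) < ⊤)
    (hνball : ∀ (y : Y) (r : ℝ), ν (Metric.ball y r) < ⊤)
    (Ω : Set X) (hΩopen : IsOpen Ω) (hΩbdd : Bornology.IsBounded Ω)
    (f : X → Y) (hf : IsHomeoOn f Ω) (hfΩopen : IsOpen (f '' Ω))
    (hνfΩ : ν (f '' Ω) < ⊤)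
    (μt : Measure X) (hle : ∀ S : Set X, μ S ≤ μt S) (hdbl : DoublingWithin μt Ω)
    (E : Set X) (hEΩ : E ⊆ Ω) (hEmeas : MeasurableSet E)
    (Q : ℝ) (hQgt : 1 < Q)
    (Rf : X → ℝ) (hRmeas : Measurable Rf) (hR0 : ∀ x ∈ Ω \ E, 0 < Rf x)
    (hae : ∀ᵐ x ∂μ.restrict (Ω \ E),
      Filter.limsup (fun r : ℝ => μ (Metric.ball x r) / ENNReal.ofReal (r ^ Q))
          (nhdsWithin 0 (Set.Ioi 0))
        < ENNReal.ofReal (Rf x) *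
          Filter.liminf (fun r : ℝ => ν (Metric.ball (f x) r) / ENNReal.ofReal (r ^ Q))
            (nhdsWithin 0 (Set.Ioi 0)))
    (hLinf : ∃ C : ℝ≥0∞, C < ⊤ ∧
      ∀ᵐ x ∂μ.restrict (Ω \ E), ENNReal.ofReal (Rf x ^ (1 / Q)) * hDil f Ω x ≤ C) :
    ∃ J : X → ℝ≥0∞,
      (∀ᵐ x ∂μ.restrict Ω, J x < ⊤ ∧
        Filter.Tendsto (fun r : ℝ => ν (f '' (Metric.ball x r ∩ Ω)) / μ (Metric.ball x r))
          (nhdsWithin 0 (Set.Ioi 0)) (nhds (J x))) ∧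
      ∀ᵐ x ∂μ.restrict (Ω \ E),
        elip f Ω x ^ Q ≤
          essSup (fun z => ENNReal.ofReal (Rf z) * hDil f Ω z ^ Q) (μ.restrict Ω) * J x := by
  classical
  obtain ⟨J, hJae⟩ := Prop53Aux.exists_jacobian μ ν hμball Ω hΩopen hΩbdd f hf hfΩopen hνfΩ
    μt hle hdbl
  refine ⟨J, hJae, ?_⟩
  have hx'exists : ∀ x ∈ Ω, ∃ x' ∈ Ω, x' ≠ x := by
    intro x hxΩ
    by_contra hcon
    push_neg at hcon
    have hΩeq : Ω = {x} := Set.eq_singleton_iff_unique_mem.2 ⟨hxΩ, fun y hy => hcon y hy⟩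
    have hclopen : IsClopen ({x} : Set X) := ⟨isClosed_singleton, hΩeq ▸ hΩopen⟩
    rcases isClopen_iff.1 hclopen with h | h
    · exact Set.singleton_ne_empty x h
    · obtain ⟨y, hy⟩ := exists_ne x
      exact hy (by rw [← Set.mem_singleton_iff, h]; trivial)
  obtain ⟨C, hC, hCae⟩ := hLinf
  set S := essSup (fun z => ENNReal.ofReal (Rf z) * hDil f Ω z ^ Q) (μ.restrict Ω) with hSdef
  have hmono : μ.restrict (Ω \ E) ≤ μ.restrict Ω := Measure.restrict_mono Set.diff_subset le_rfl
  have hSae : ∀ᵐ z ∂μ.restrict (Ω \ E),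
      ENNReal.ofReal (Rf z) * hDil f Ω z ^ Q ≤ S :=
    ae_mono hmono (ENNReal.ae_le_essSup _)
  have hJae' : ∀ᵐ x ∂μ.restrict (Ω \ E), J x < ⊤ ∧
      Filter.Tendsto (fun r : ℝ => ν (f '' (Metric.ball x r ∩ Ω)) / μ (Metric.ball x r))
        (nhdsWithin 0 (Set.Ioi 0)) (nhds (J x)) := ae_mono hmono hJae
  have hmem : ∀ᵐ x ∂μ.restrict (Ω \ E), x ∈ Ω \ E :=
    ae_restrict_mem (hΩopen.measurableSet.diff hEmeas)
  filter_upwards [hae, hCae, hSae, hJae', hmem] with x hx1 hx2 hx3 hx4 hx5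
  obtain ⟨x', hx'Ω, hx'ne⟩ := hx'exists x hx5.1
  have hRpos : 0 < Rf x := hR0 x hx5
  have hofpos : ENNReal.ofReal (Rf x ^ (1/Q)) ≠ 0 :=
    ne_of_gt (ENNReal.ofReal_pos.2 (Real.rpow_pos_of_pos hRpos _))
  have hA : hDil f Ω x ≠ ⊤ := by
    intro htop
    rw [htop, ENNReal.mul_top hofpos] at hx2
    exact absurd (lt_of_le_of_lt hx2 hC) (by simp)
  exact Prop53Aux.key_pointwise μ ν Ω f hfΩopen Q hQgt (ENNReal.ofReal (Rf x))
    (ne_of_gt (ENNReal.ofReal_pos.2 hRpos)) ENNReal.ofReal_ne_top S (J x)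
    x hx5.1 x' hx'Ω hx'ne (fun r => hμball x r) hA hx3 hx4.2 hx4.1.ne hx1
end
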